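/- Let $n \geq 1$, $\alpha > 0$, $N > 0$, and $\rho_1, \rho_2 > 0$. There exists a constant $C = C(n,\alpha,N) > 0$ such that for all $t > 0$ and $r > 0$: $\min\left\{ \frac{t^{1+N/\alpha}}{r^{\,n+2\alpha+2N}},\ t^{-n/(2\alpha)} \right\} \left(1 + \frac{t^{1/(2\alpha)}}{\rho_1} + \frac{t^{1/(2\alpha)}}{\rho_2}\right)^{-N} \leq \frac{C}{r^{n}} \left(1 + \frac{r}{\rho_1} + \frac{r}{\rho_2}\right)^{-N}$. -/
import Mathlib


theorem sup_in_t_kernel_bound (n : ℕ) (hn : 1 ≤ n) (α N : ℝ) (hα : 0 < α) (hN : 0 < N)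
    (ρ₁ ρ₂ : ℝ) (hρ₁ : 0 < ρ₁) (hρ₂ : 0 < ρ₂) :
    ∃ C > (0:ℝ),
      ∀ t r : ℝ, 0 < t → 0 < r →
        min (t ^ (1 + N/α) / r ^ ((n:ℝ) + 2*α + 2*N)) (t ^ (-(n:ℝ)/(2*α))) *
            (1 + t ^ (1/(2*α)) / ρ₁ + t ^ (1/(2*α)) / ρ₂) ^ (-N)
          ≤ C / r ^ (n:ℝ) * (1 + r / ρ₁ + r / ρ₂) ^ (-N) := by
  refine ⟨1, one_pos, fun t r ht hr => ?_⟩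
  set s : ℝ := t ^ (1/(2*α)) with hs_def
  have hs : 0 < s := Real.rpow_pos_of_pos ht _
  set A : ℝ := 1 + s / ρ₁ + s / ρ₂ with hA_def
  set B : ℝ := 1 + r / ρ₁ + r / ρ₂ with hB_def
  have hA : 0 < A := by positivity
  have hB : 0 < B := by positivity
  have hα' : (2*α) ≠ 0 := by positivity
  rcases le_total r s with hc | hc
  · -- r ≤ s : use t^(-n/(2α)) = s^(-n)
    have h1 : t ^ (-(n:ℝ)/(2*α)) = s ^ (-(n:ℝ)) := by
      rw [hs_def, ← Real.rpow_mul ht.le]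
      ring_nf
    have h2 : s ^ (-(n:ℝ)) ≤ r ^ (-(n:ℝ)) := by
      exact Real.rpow_le_rpow_of_nonpos hr hc (by simp [Nat.cast_nonneg])
    have h3 : A ^ (-N) ≤ B ^ (-N) := by
      apply Real.rpow_le_rpow_of_nonpos hB _ (by linarith)
      have : r / ρ₁ ≤ s / ρ₁ := by gcongr
      have : r / ρ₂ ≤ s / ρ₂ := by gcongr
      rw [hA_def, hB_def]; linarith
    calc min (t ^ (1 + N/α) / r ^ ((n:ℝ) + 2*α + 2*N)) (t ^ (-(n:ℝ)/(2*α))) * A ^ (-N)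
        ≤ t ^ (-(n:ℝ)/(2*α)) * A ^ (-N) := by
          gcongr; exact min_le_right _ _
      _ ≤ r ^ (-(n:ℝ)) * B ^ (-N) := by
          rw [h1]
          exact mul_le_mul h2 h3 (by positivity) (by positivity)
      _ = 1 / r ^ (n:ℝ) * B ^ (-N) := by
          rw [Real.rpow_neg hr.le, one_div]
  · -- s ≤ r : use first term
    have h1 : t ^ (1 + N/α) = s ^ (2*α + 2*N) := by
      rw [hs_def, ← Real.rpow_mul ht.le]
      congr 1
      field_simp
    -- A^(-N) ≤ (r/s)^N * B^(-N)
    have hrs : (0:ℝ) < r / s := by positivity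
    have hBA : B ≤ (r/s) * A := by
      have h1s : (1:ℝ) ≤ r / s := (one_le_div hs).mpr hc
      have e : (r/s) * A = r/s + r/ρ₁ + r/ρ₂ := by
        rw [hA_def]; field_simp
      rw [e, hB_def]; linarith
    have h2 : (r/s) ^ (-N) * A ^ (-N) ≤ B ^ (-N) := by
      rw [← Real.mul_rpow hrs.le hA.le]
      exact Real.rpow_le_rpow_of_nonpos hB hBA (by linarith)
    have h3 : A ^ (-N) ≤ (r/s) ^ N * B ^ (-N) := by
      have := mul_le_mul_of_nonneg_left h2 (le_of_lt (Real.rpow_pos_of_pos hrs N))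
      calc A ^ (-N) = (r/s) ^ N * ((r/s) ^ (-N) * A ^ (-N)) := by
            rw [← mul_assoc, ← Real.rpow_add hrs]
            simp
        _ ≤ (r/s) ^ N * B ^ (-N) := this
    have key : s ^ (2*α + 2*N) / r ^ ((n:ℝ) + 2*α + 2*N) * (r/s) ^ N ≤ 1 / r ^ (n:ℝ) := by
      rw [Real.div_rpow hr.le hs.le]
      have e1 : s ^ (2*α + 2*N) = s ^ (2*α + N) * s ^ N := by
        rw [← Real.rpow_add hs]; ring_nf
      have e2 : r ^ ((n:ℝ) + 2*α + 2*N) = r ^ (n:ℝ) * r ^ (2*α + N) * r ^ N := by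
        rw [← Real.rpow_add hr, ← Real.rpow_add hr]; ring_nf
      have hsr : s ^ (2*α + N) ≤ r ^ (2*α + N) :=
        Real.rpow_le_rpow hs.le hc (by positivity)
      rw [e1, e2]
      rw [div_mul_eq_mul_div, div_le_div_iff₀ (by positivity) (by positivity)]
      have h4 : s ^ (2*α + N) * r ^ (n:ℝ) ≤ r ^ (2*α + N) * r ^ (n:ℝ) := by
        gcongr
      calc s ^ (2*α + N) * s ^ N * (r ^ N / s ^ N) * r ^ (n:ℝ)
          = s ^ (2*α + N) * r ^ (n:ℝ) * r ^ N := by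
            field_simp [ne_of_gt (Real.rpow_pos_of_pos hs N)]
        _ ≤ r ^ (2*α + N) * r ^ (n:ℝ) * r ^ N := by gcongr
        _ = 1 * (r ^ (n:ℝ) * r ^ (2*α + N) * r ^ N) := by ring
    calc min (t ^ (1 + N/α) / r ^ ((n:ℝ) + 2*α + 2*N)) (t ^ (-(n:ℝ)/(2*α))) * A ^ (-N)
        ≤ (t ^ (1 + N/α) / r ^ ((n:ℝ) + 2*α + 2*N)) * ((r/s) ^ N * B ^ (-N)) := by
          apply mul_le_mul (min_le_left _ _) h3 (by positivity) (by positivity)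
      _ = (s ^ (2*α + 2*N) / r ^ ((n:ℝ) + 2*α + 2*N) * (r/s) ^ N) * B ^ (-N) := by
          rw [h1]; ring
      _ ≤ 1 / r ^ (n:ℝ) * B ^ (-N) := by
          gcongr
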